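/- For a one-dimensional Gaussian G ~ N(0, σ²) and any measurable set A ⊆ ℝ with P(x + G ∈ A) = p ∈ (0,1), and any shift δ ∈ ℝ with |δ| ≤ ε, one has P(x + δ + G ∈ A) ≥ Φ(Φ⁻¹(p) − ε/σ). -/

import Mathlib

/-!
Neyman–Pearson. For `δ ≥ 0` the likelihood ratio of `N(δ, σ²)` against `N(0, σ²)` is
`u ↦ exp ((2uδ - δ²) / 2σ²)`, increasing in `u`. Among sets of a given `N(0, σ²)`-mass the
`N(δ, σ²)`-mass is therefore smallest for a half-line `(-∞, t]`, and for the mass `p = Φ(t/σ)`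
that half-line has `N(δ, σ²)`-mass `Φ(Φ⁻¹(p) - δ/σ)`. Negative shifts reduce to positive ones
by the symmetry `u ↦ -u` of the centred Gaussian.
-/

open MeasureTheory ProbabilityTheory Real Set Filter

/-- Standard normal CDF. -/
noncomputable def Phi (x : ℝ) : ℝ := ((gaussianReal 0 1) (Set.Iic x)).toReal

/-- Standard normal quantile function (inverse CDF). -/
noncomputable def PhiInv : ℝ → ℝ := Function.invFun Phi

/-- Gaussian measure `N(0, σ² I)` on `Fin n → ℝ`. -/
noncomputable def gaussPi (n : ℕ) (σ : ℝ) : Measure (Fin n → ℝ) :=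
  Measure.pi (fun _ => gaussianReal 0 ⟨σ ^ 2, sq_nonneg σ⟩)

/-- Upper `p`-quantile of a (law) measure on ℝ: `inf {y | P(X ≤ y) ≥ p}`. -/
noncomputable def upperQ (ν : Measure ℝ) (p : ℝ) : ℝ :=
  sInf {y : ℝ | p ≤ (ν (Set.Iic y)).toReal}

/-- Lower `p`-quantile of a (law) measure on ℝ: `sup {y | P(X ≤ y) ≤ p}`. -/
noncomputable def lowerQ (ν : Measure ℝ) (p : ℝ) : ℝ :=
  sSup {y : ℝ | (ν (Set.Iic y)).toReal ≤ p}

/-- Law of `g (x + G)` with `G ~ N(0, σ² I)`. -/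
noncomputable def smoothedLaw {n : ℕ} (σ : ℝ) (g : (Fin n → ℝ) → ℝ) (x : Fin n → ℝ) :
    Measure ℝ :=
  (gaussPi n σ).map (fun u => g (x + u))

open scoped ENNReal NNReal

namespace ProbabilityTheory

variable {μ : Measure ℝ} [IsProbabilityMeasure μ] [NullSingletonClass μ]

lemma continuous_cdf : Continuous (cdf μ) := by
  refine continuous_iff_continuousAt.2 fun x => ?_
  rw [(cdf μ).mono.continuousAt_iff_leftLim_eq_rightLim, (cdf μ).rightLim_eq]
  have hatom : (cdf μ).measure {x} = 0 := by rw [measure_cdf]; exact measure_singleton x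
  rw [StieltjesFunction.measure_singleton, ENNReal.ofReal_eq_zero] at hatom
  linarith [(cdf μ).mono.leftLim_le (le_refl x)]

lemma exists_cdf_eq {p : ℝ} (hp : p ∈ Ioo 0 1) : ∃ y, cdf μ y = p := by
  obtain ⟨a, ha⟩ := ((tendsto_cdf_atBot μ).eventually_lt_const hp.1).exists
  obtain ⟨b, hb⟩ := ((tendsto_cdf_atTop μ).eventually_const_lt hp.2).exists
  exact intermediate_value_univ a b continuous_cdf ⟨ha.le, hb.le⟩

end ProbabilityTheory

lemma Phi_eq_cdf : Phi = cdf (gaussianReal 0 1) := funext fun y => (cdf_eq_real _ y).symm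

lemma monotone_Phi : Monotone Phi := Phi_eq_cdf ▸ monotone_cdf _

lemma Phi_PhiInv {p : ℝ} (hp : p ∈ Ioo 0 1) : Phi (PhiInv p) = p :=
  have := nullSingletonClass_gaussianReal (μ := 0) one_ne_zero
  Function.invFun_eq (Phi_eq_cdf ▸ exists_cdf_eq hp)

lemma gaussianReal_Iic_toReal (m : ℝ) {σ : ℝ} (hσ : 0 < σ) (s : ℝ) :
    (gaussianReal m ⟨σ ^ 2, sq_nonneg σ⟩ (Iic s)).toReal = Phi ((s - m) / σ) := by
  have hmap :
      ((gaussianReal 0 1).map (σ * ·)).map (· + m) = gaussianReal m ⟨σ ^ 2, sq_nonneg σ⟩ := by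
    rw [gaussianReal_map_const_mul, gaussianReal_map_add_const, mul_zero, zero_add, mul_one]
    rfl
  rw [← hmap, Measure.map_map (measurable_add_const m) (measurable_const_mul σ),
    Measure.map_apply (by fun_prop) measurableSet_Iic, Phi]
  congr 2
  ext u
  simp only [mem_preimage, Function.comp_apply, mem_Iic, le_div_iff₀ hσ]
  constructor <;> intro h <;> linarith

theorem setLIntegral_le_of_neymanPearson {α : Type*} [MeasurableSpace α] {m : Measure α}
    {f g : α → ℝ≥0∞} (hf : Measurable f) {H B : Set α} (hH : MeasurableSet H)
    (hB : MeasurableSet B) {r : ℝ≥0∞} (hr : r ≠ ∞) (h_in : ∀ u ∈ H, f u ≤ r * g u)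
    (h_out : ∀ u ∉ H, r * g u ≤ f u) (hmass : ∫⁻ u in B, g u ∂m = ∫⁻ u in H, g u ∂m)
    (hfin : ∫⁻ u in H, g u ∂m ≠ ∞) :
    ∫⁻ u in H, f u ∂m ≤ ∫⁻ u in B, f u ∂m := by
  -- `(𝟙_H - 𝟙_B) (f - r g) ≤ 0` pointwise, rearranged to avoid subtraction in `ℝ≥0∞`.
  have key : ∀ u, H.indicator f u + B.indicator (fun u => r * g u) u
      ≤ B.indicator f u + H.indicator (fun u => r * g u) u := by
    intro u
    by_cases huB : u ∈ B <;> by_cases huH : u ∈ H <;> simp [huB, huH, h_in, h_out]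
  have := lintegral_mono key (μ := m)
  rw [lintegral_add_left (hf.indicator hH), lintegral_add_left (hf.indicator hB),
    lintegral_indicator hH, lintegral_indicator hB, lintegral_indicator hB,
    lintegral_indicator hH, lintegral_const_mul' _ _ hr, lintegral_const_mul' _ _ hr,
    hmass] at this
  exact (ENNReal.add_le_add_iff_right (ENNReal.mul_ne_top hr hfin)).1 this

lemma gaussianPDFReal_eq_exp_mul (δ : ℝ) (v : ℝ≥0) (u : ℝ) :
    gaussianPDFReal δ v u = exp ((2 * u * δ - δ ^ 2) / (2 * v)) * gaussianPDFReal 0 v u := by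
  simp only [gaussianPDFReal, sub_zero]
  rw [mul_left_comm, ← exp_add]
  congr 2
  ring

lemma gaussianReal_Iic_le_of_nonneg {δ : ℝ} (hδ : 0 ≤ δ) {v : ℝ≥0} (hv : v ≠ 0) {B : Set ℝ}
    (hB : MeasurableSet B) {t : ℝ} (hBt : gaussianReal 0 v B = gaussianReal 0 v (Iic t)) :
    gaussianReal δ v (Iic t) ≤ gaussianReal δ v B := by
  set ℓ := fun u : ℝ => exp ((2 * u * δ - δ ^ 2) / (2 * v))
  have hℓ : Monotone ℓ := fun a b hab =>
    exp_le_exp.2 (div_le_div_of_nonneg_right (by nlinarith) (by positivity))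
  have hpdf : ∀ u, gaussianPDF δ v u = ENNReal.ofReal (ℓ u) * gaussianPDF 0 v u := fun u => by
    rw [gaussianPDF, gaussianPDF, ← ENNReal.ofReal_mul (exp_pos _).le,
      gaussianPDFReal_eq_exp_mul]
  simp only [gaussianReal_apply _ hv] at hBt ⊢
  refine setLIntegral_le_of_neymanPearson (measurable_gaussianPDF δ v) measurableSet_Iic hB
    ENNReal.ofReal_ne_top (r := ENNReal.ofReal (ℓ t)) (fun u hu => ?_) (fun u hu => ?_) hBt ?_
  · rw [hpdf]; gcongr; exact hℓ hu
  · rw [hpdf]; gcongr; exact hℓ (not_le.1 hu).le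
  · rw [← gaussianReal_apply _ hv]; exact measure_ne_top _ _

lemma gaussianReal_Iic_le_abs (δ : ℝ) {v : ℝ≥0} (hv : v ≠ 0) {B : Set ℝ}
    (hB : MeasurableSet B) {t : ℝ} (hBt : gaussianReal 0 v B = gaussianReal 0 v (Iic t)) :
    gaussianReal |δ| v (Iic t) ≤ gaussianReal δ v B := by
  rcases le_total 0 δ with hδ | hδ
  · rw [abs_of_nonneg hδ]; exact gaussianReal_Iic_le_of_nonneg hδ hv hB hBt
  · have hneg : ∀ m, gaussianReal m v (Neg.neg ⁻¹' B) = gaussianReal (-m) v B := fun m => by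
      rw [← gaussianReal_map_neg, Measure.map_apply measurable_neg hB]
    rw [abs_of_nonpos hδ, ← neg_neg δ, ← hneg, neg_neg]
    refine gaussianReal_Iic_le_of_nonneg (neg_nonneg.2 hδ) hv (measurable_neg hB) ?_
    rwa [hneg, neg_zero]

theorem stmt_17_general (σ ε x δ p : ℝ) (hσ : 0 < σ) (hδ : |δ| ≤ ε)
    (A : Set ℝ) (hA : MeasurableSet A) (hp : p ∈ Set.Ioo (0:ℝ) 1)
    (hPA : ((gaussianReal 0 ⟨σ ^ 2, sq_nonneg σ⟩) {u | x + u ∈ A}).toReal = p) :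
    Phi (PhiInv p - ε / σ) ≤
      ((gaussianReal 0 ⟨σ ^ 2, sq_nonneg σ⟩) {u | x + δ + u ∈ A}).toReal := by
  set v : ℝ≥0 := ⟨σ ^ 2, sq_nonneg σ⟩
  have hv : v ≠ 0 := by rw [ne_eq, ← NNReal.coe_eq_zero]; exact (pow_pos hσ 2).ne'
  set B := (x + ·) ⁻¹' A
  have hB : MeasurableSet B := measurable_const_add x hA
  have hshift : gaussianReal 0 v {u | x + δ + u ∈ A} = gaussianReal δ v B := by
    have hmap := gaussianReal_map_const_add (μ := 0) (v := v) δ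
    rw [zero_add] at hmap
    rw [← hmap, Measure.map_apply (measurable_const_add δ) hB]
    simp only [B, preimage_preimage, add_assoc]
    rfl
  set t := σ * PhiInv p
  have hBt : gaussianReal 0 v B = gaussianReal 0 v (Iic t) := by
    rw [← ENNReal.toReal_eq_toReal_iff' (measure_ne_top _ _) (measure_ne_top _ _),
      gaussianReal_Iic_toReal 0 hσ, sub_zero, mul_div_cancel_left₀ _ hσ.ne', Phi_PhiInv hp]
    exact hPA
  calc Phi (PhiInv p - ε / σ) ≤ Phi (PhiInv p - |δ| / σ) := monotone_Phi (by gcongr)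
    _ = (gaussianReal |δ| v (Iic t)).toReal := by
      rw [gaussianReal_Iic_toReal _ hσ, sub_div, mul_div_cancel_left₀ _ hσ.ne']
    _ ≤ (gaussianReal δ v B).toReal :=
      ENNReal.toReal_mono (measure_ne_top _ _) (gaussianReal_Iic_le_abs δ hv hB hBt)
    _ = _ := by rw [hshift]

/-- one-dimensional Gaussian shift lower bound.  For a real Gaussian
`G ~ N(0, σ²)`, a Borel set `A` with `P(x + G ∈ A) = p ∈ (0,1)`, and a shift with
`|δ| ≤ ε`, one has `P(x + δ + G ∈ A) ≥ Φ(Φ⁻¹(p) − ε/σ)`. -/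
theorem stmt_17 (σ ε x δ p : ℝ) (hσ : 0 < σ) (hε : 0 ≤ ε) (hδ : |δ| ≤ ε)
    (A : Set ℝ) (hA : MeasurableSet A) (hp : p ∈ Set.Ioo (0:ℝ) 1)
    (hPA : ((gaussianReal 0 ⟨σ ^ 2, sq_nonneg σ⟩) {u | x + u ∈ A}).toReal = p) :
    Phi (PhiInv p - ε / σ) ≤
      ((gaussianReal 0 ⟨σ ^ 2, sq_nonneg σ⟩) {u | x + δ + u ∈ A}).toReal :=
  stmt_17_general σ ε x δ p hσ hδ A hA hp hPA
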